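/- If f (on a compact metric space M) and g (on a compact metric space N) are uniformly conjugate non-autonomous dynamical systems, then H_i(f) = H_i(g) for every i ∈ ℤ. -/

import Mathlib

/-!
A uniformly equicontinuous semiconjugacy `h` from `f` onto `g` carries `(n, δ)`-spanning sets of
`f` at time `i` to `(n, ε)`-spanning sets of `g`, with `δ` depending on `ε` but not on `n` or `i`.
Hence `r[n,i](ε,g) ≤ r[n,i](δ,f)` for all `n`, so `r[i](ε,g) ≤ r[i](δ,f) ≤ H_i(f)`, and
`H_i(g) ≤ H_i(f)`. A uniform conjugacy is such a semiconjugacy in both directions.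
-/


open Filter Topology Set

variable {M : Type*} {N : Type*}

/-- The `n`-th composition `f_i^n = f_{i+n-1} ∘ ⋯ ∘ f_i` of a non-autonomous
dynamical system `f = (f_i)_{i ∈ ℤ}` of homeomorphisms of `M`. -/
def nsIter [TopologicalSpace M] (f : ℤ → M ≃ₜ M) (i : ℤ) : ℕ → M → M
  | 0 => id
  | n + 1 => (f (i + n)) ∘ nsIter f i n

/-- `K` is an `(n, ε)`-spanning set for `f` at time `i`. -/
def IsSpanningSet [PseudoMetricSpace M] (f : ℤ → M ≃ₜ M) (i : ℤ) (n : ℕ) (ε : ℝ)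
    (K : Set M) : Prop :=
  ∀ x : M, ∃ y ∈ K, ∀ j < n, dist (nsIter f i j x) (nsIter f i j y) < ε

/-- `E` is an `(n, ε)`-separated set for `f` at time `i`. -/
def IsSeparatedSet [PseudoMetricSpace M] (f : ℤ → M ≃ₜ M) (i : ℤ) (n : ℕ) (ε : ℝ)
    (E : Set M) : Prop :=
  ∀ x ∈ E, ∀ y ∈ E, x ≠ y → ∃ j < n, ε < dist (nsIter f i j x) (nsIter f i j y)

/-- `r[n,i](ε,f)`: the smallest cardinality of a finite `(n, ε)`-spanning set at time `i`. -/
noncomputable def rSpan [PseudoMetricSpace M] (f : ℤ → M ≃ₜ M) (i : ℤ) (n : ℕ) (ε : ℝ) : ℕ :=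
  sInf {k | ∃ K : Finset M, K.card = k ∧ IsSpanningSet f i n ε ↑K}

/-- `s[n,i](ε,f)`: the largest cardinality of an `(n, ε)`-separated set at time `i`. -/
noncomputable def sSep [PseudoMetricSpace M] (f : ℤ → M ≃ₜ M) (i : ℤ) (n : ℕ) (ε : ℝ) : ℕ :=
  sSup {k | ∃ E : Finset M, E.card = k ∧ IsSeparatedSet f i n ε ↑E}

/-- `r[i](ε,f) = limsup_{n → ∞} (1/n) log r[n,i](ε,f)`. -/
noncomputable def rGrowth [PseudoMetricSpace M] (f : ℤ → M ≃ₜ M) (i : ℤ) (ε : ℝ) : EReal :=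
  Filter.atTop.limsup fun n : ℕ => ((Real.log (rSpan f i n ε) / n : ℝ) : EReal)

/-- `s[i](ε,f) = limsup_{n → ∞} (1/n) log s[n,i](ε,f)`. -/
noncomputable def sGrowth [PseudoMetricSpace M] (f : ℤ → M ≃ₜ M) (i : ℤ) (ε : ℝ) : EReal :=
  Filter.atTop.limsup fun n : ℕ => ((Real.log (sSep f i n ε) / n : ℝ) : EReal)

/-- The topological entropy `H_i(f) = lim_{ε → 0⁺} r[i](ε,f)`; since `ε ↦ r[i](ε,f)` is
antitone, this one-sided limit equals the supremum over `ε > 0`. -/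
noncomputable def nsEntropy [PseudoMetricSpace M] (f : ℤ → M ≃ₜ M) (i : ℤ) : EReal :=
  ⨆ (ε : ℝ) (_ : 0 < ε), rGrowth f i ε

section Semiconjugacy

variable [PseudoMetricSpace M] [PseudoMetricSpace N]

lemma continuous_nsIter (f : ℤ → M ≃ₜ M) (i : ℤ) (n : ℕ) : Continuous (nsIter f i n) := by
  induction n with
  | zero => exact continuous_id
  | succ n ih => exact (f (i + n)).continuous.comp ih

lemma apply_nsIter_of_semiconj {f : ℤ → M ≃ₜ M} {g : ℤ → N ≃ₜ N} {h : ℤ → M → N}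
    (hconj : ∀ i x, h (i + 1) (f i x) = g i (h i x)) (i : ℤ) (n : ℕ) (x : M) :
    h (i + n) (nsIter f i n x) = nsIter g i n (h i x) := by
  induction n with
  | zero => simp [nsIter]
  | succ n ih =>
    rw [Nat.cast_succ, ← add_assoc]
    simp only [nsIter, Function.comp_apply, hconj, ih]

lemma exists_pos_forall_dist_nsIter_lt [CompactSpace M] (f : ℤ → M ≃ₜ M) (i : ℤ) (n : ℕ)
    {ε : ℝ} (hε : 0 < ε) :
    ∃ δ > 0, ∀ x y : M, dist x y < δ → ∀ j < n, dist (nsIter f i j x) (nsIter f i j y) < ε := by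
  induction n with
  | zero => exact ⟨ε, hε, fun _ _ _ j hj => absurd hj j.not_lt_zero⟩
  | succ n ih =>
    obtain ⟨δ₁, hδ₁, H₁⟩ := ih
    obtain ⟨δ₂, hδ₂, H₂⟩ := Metric.uniformContinuous_iff.mp
      (CompactSpace.uniformContinuous_of_continuous (continuous_nsIter f i n)) ε hε
    refine ⟨min δ₁ δ₂, lt_min hδ₁ hδ₂, fun x y hxy j hj => ?_⟩
    rcases Nat.lt_succ_iff_lt_or_eq.mp hj with hj | rfl
    · exact H₁ x y (hxy.trans_le (min_le_left _ _)) j hj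
    · exact H₂ (hxy.trans_le (min_le_right _ _))

lemma exists_finset_isSpanningSet [CompactSpace M] (f : ℤ → M ≃ₜ M) (i : ℤ) (n : ℕ)
    {ε : ℝ} (hε : 0 < ε) : ∃ K : Finset M, IsSpanningSet f i n ε K := by
  obtain ⟨δ, hδ, H⟩ := exists_pos_forall_dist_nsIter_lt f i n hε
  obtain ⟨K, -, hKfin, hK⟩ := finite_cover_balls_of_compact (isCompact_univ (X := M)) hδ
  refine ⟨hKfin.toFinset, fun x => ?_⟩
  obtain ⟨y, hy, hxy⟩ := mem_iUnion₂.mp (hK (mem_univ x))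
  exact ⟨y, by simpa using hy, H x y hxy⟩

lemma rSpan_le_card {f : ℤ → M ≃ₜ M} {i : ℤ} {n : ℕ} {ε : ℝ} {K : Finset M}
    (hK : IsSpanningSet f i n ε K) : rSpan f i n ε ≤ K.card :=
  Nat.sInf_le ⟨K, rfl, hK⟩

lemma exists_isSpanningSet_card_eq_rSpan [CompactSpace M] (f : ℤ → M ≃ₜ M) (i : ℤ) (n : ℕ)
    {ε : ℝ} (hε : 0 < ε) : ∃ K : Finset M, K.card = rSpan f i n ε ∧ IsSpanningSet f i n ε K :=
  let ⟨K, hK⟩ := exists_finset_isSpanningSet f i n hε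
  Nat.sInf_mem (s := {k | ∃ K : Finset M, K.card = k ∧ IsSpanningSet f i n ε K}) ⟨_, K, rfl, hK⟩

lemma IsSpanningSet.image_of_semiconj {f : ℤ → M ≃ₜ M} {g : ℤ → N ≃ₜ N} {h : ℤ → M → N}
    (hconj : ∀ i x, h (i + 1) (f i x) = g i (h i x)) {i : ℤ} (hsurj : Function.Surjective (h i))
    {n : ℕ} {ε δ : ℝ} (hδ : ∀ j, ∀ x y : M, dist x y < δ → dist (h j x) (h j y) < ε)
    {K : Set M} (hK : IsSpanningSet f i n δ K) : IsSpanningSet g i n ε (h i '' K) := by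
  intro u
  obtain ⟨x, rfl⟩ := hsurj u
  obtain ⟨y, hy, hxy⟩ := hK x
  refine ⟨h i y, mem_image_of_mem _ hy, fun j hj => ?_⟩
  rw [← apply_nsIter_of_semiconj hconj, ← apply_nsIter_of_semiconj hconj]
  exact hδ _ _ _ (hxy j hj)

lemma rSpan_le_of_semiconj [CompactSpace M] {f : ℤ → M ≃ₜ M} {g : ℤ → N ≃ₜ N}
    {h : ℤ → M → N} (hconj : ∀ i x, h (i + 1) (f i x) = g i (h i x)) {i : ℤ}
    (hsurj : Function.Surjective (h i)) (n : ℕ) {ε δ : ℝ} (hδ₀ : 0 < δ)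
    (hδ : ∀ j, ∀ x y : M, dist x y < δ → dist (h j x) (h j y) < ε) :
    rSpan g i n ε ≤ rSpan f i n δ := by
  classical
  obtain ⟨K, hcard, hK⟩ := exists_isSpanningSet_card_eq_rSpan f i n hδ₀
  have hspan : IsSpanningSet g i n ε (K.image (h i)) := by
    rw [Finset.coe_image]
    exact hK.image_of_semiconj hconj hsurj hδ
  calc rSpan g i n ε ≤ (K.image (h i)).card := rSpan_le_card hspan
    _ ≤ K.card := Finset.card_image_le
    _ = rSpan f i n δ := hcard

lemma log_natCast_le_log_natCast {a b : ℕ} (hab : a ≤ b) : Real.log a ≤ Real.log b := by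
  rcases a.eq_zero_or_pos with rfl | ha
  · simpa using Real.log_natCast_nonneg b
  · exact Real.log_le_log (by exact_mod_cast ha) (by exact_mod_cast hab)

lemma rGrowth_le_of_rSpan_le {f : ℤ → M ≃ₜ M} {g : ℤ → N ≃ₜ N} {i : ℤ} {ε δ : ℝ}
    (hle : ∀ n, rSpan g i n ε ≤ rSpan f i n δ) : rGrowth g i ε ≤ rGrowth f i δ := by
  refine limsup_le_limsup (Eventually.of_forall fun n => ?_)
  exact EReal.coe_le_coe_iff.mpr <|
    div_le_div_of_nonneg_right (log_natCast_le_log_natCast (hle n)) n.cast_nonneg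

theorem nsEntropy_le_of_semiconj [CompactSpace M] {f : ℤ → M ≃ₜ M} {g : ℤ → N ≃ₜ N}
    {h : ℤ → M → N} (hconj : ∀ i x, h (i + 1) (f i x) = g i (h i x)) {i : ℤ}
    (hsurj : Function.Surjective (h i))
    (hequi : ∀ ε > (0 : ℝ), ∃ δ > (0 : ℝ), ∀ j, ∀ x y : M,
      dist x y < δ → dist (h j x) (h j y) < ε) :
    nsEntropy g i ≤ nsEntropy f i := by
  refine iSup₂_le fun ε hε => ?_
  obtain ⟨δ, hδ₀, hδ⟩ := hequi ε hε
  calc rGrowth g i ε ≤ rGrowth f i δ :=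
        rGrowth_le_of_rSpan_le fun n => rSpan_le_of_semiconj hconj hsurj n hδ₀ hδ
    _ ≤ nsEntropy f i := le_iSup₂ (f := fun (δ : ℝ) (_ : 0 < δ) => rGrowth f i δ) δ hδ₀

end Semiconjugacy

/-- if `f` (on a compact metric space `M`) and `g` (on a compact metric space `N`)
are uniformly conjugate non-autonomous dynamical systems, then `H_i(f) = H_i(g)` for every
`i ∈ ℤ`. -/
theorem nsEntropy_eq_of_uniformConjugacy [MetricSpace M] [CompactSpace M]
    [MetricSpace N] [CompactSpace N]
    (f : ℤ → M ≃ₜ M) (g : ℤ → N ≃ₜ N) (h : ℤ → M ≃ₜ N)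
    (hconj : ∀ i : ℤ, ∀ x : M, h (i + 1) (f i x) = g i (h i x))
    (hequi : ∀ ε > (0 : ℝ), ∃ δ > (0 : ℝ), ∀ i : ℤ, ∀ x y : M,
      dist x y < δ → dist (h i x) (h i y) < ε)
    (hequi' : ∀ ε > (0 : ℝ), ∃ δ > (0 : ℝ), ∀ i : ℤ, ∀ u v : N,
      dist u v < δ → dist ((h i).symm u) ((h i).symm v) < ε)
    (i : ℤ) : nsEntropy f i = nsEntropy g i := by
  have hconj_symm : ∀ j u, (h (j + 1)).symm (g j u) = f j ((h j).symm u) := fun j u =>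
    (h (j + 1)).symm_apply_eq.mpr (by rw [hconj, (h j).apply_symm_apply])
  exact le_antisymm
    (nsEntropy_le_of_semiconj (h := fun j => (h j).symm) hconj_symm (h i).symm.surjective hequi')
    (nsEntropy_le_of_semiconj hconj (h i).surjective hequi)
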